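/- Let x be a circular string of length G over {A,C,G,T} and let y be obtained from x by the random substitution process with rate p. Fix k ≥ 1. For a k-mer v, let f'_v be the number of positions i (out of the G circular positions) with y[i:i+k−1] = v, and for a k-mer w let f_w be the number of positions i with x[i:i+k−1] = w. Then E[f'_v] = Σ_{w ∈ K} f_w·(1−p)^{k−d_H(v,w)}·(p/3)^{d_H(v,w)}, where K is the set of distinct k-mers occurring in x. -/
import Mathlib


open MeasureTheory

noncomputable section

/-- Substitution kernel weight: probability that letter `a` becomes letter `b`
under the rate-`q` substitution process. -/
def substW (q : ℝ) (a b : Fin 4) : ℝ := if b = a then 1 - q else q / 3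

/-- The discrete measure on a finite type with weight function `w`. -/
def discMeasure {α : Type*} [Fintype α] [MeasurableSpace α] (w : α → ℝ) : Measure α :=
  ∑ a : α, ENNReal.ofReal (w a) • Measure.dirac a

/-- Weight of outcome `y` for the rate-`p` substitution process applied to `x`. -/
def mutateW {G : ℕ} (p : ℝ) (x y : Fin G → Fin 4) : ℝ := ∏ i, substW p (x i) (y i)

/-- Distribution of the string obtained from `x` by the random substitution
process with rate `p`: i.i.d. substitutions at every position. -/
def mutate {G : ℕ} (p : ℝ) (x : Fin G → Fin 4) : Measure (Fin G → Fin 4) :=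
  discMeasure (mutateW p x)

/-- Number of occurrences of the letter `a` in the string `z`. -/
def countLetter {G : ℕ} (z : Fin G → Fin 4) (a : Fin 4) : ℕ :=
  (Finset.univ.filter fun i => z i = a).card

/-- Reduction of a natural number modulo `G`, as an element of `Fin G`. -/
def wrap (G : ℕ) (hG : 0 < G) (n : ℕ) : Fin G := ⟨n % G, Nat.mod_lt n hG⟩

/-- The length-`k` circular window of `z` starting at position `i`,
i.e. `(z_i, z_{i+1}, …, z_{i+k−1})` with indices taken mod `G`. -/
def window {G : ℕ} (hG : 0 < G) (z : Fin G → Fin 4) (k : ℕ) (i : Fin G) : Fin k → Fin 4 :=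
  fun t => z (wrap G hG ((i : ℕ) + (t : ℕ)))

lemma integral_discMeasure {α : Type*} [Fintype α] [MeasurableSpace α]
    [MeasurableSingletonClass α] (w : α → ℝ) (hw : ∀ a, 0 ≤ w a) (f : α → ℝ) :
    ∫ z, f z ∂(discMeasure w) = ∑ a, w a * f a := by
  have hfin : ∀ a : α, IsFiniteMeasure (ENNReal.ofReal (w a) • Measure.dirac a) := by
    intro a
    refine ⟨?_⟩
    simp [ENNReal.ofReal_lt_top]
  rw [discMeasure, integral_finset_sum_measure]
  · refine Finset.sum_congr rfl fun a _ => ?_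
    rw [integral_smul_measure, integral_dirac, ENNReal.toReal_ofReal (hw a), smul_eq_mul]
  · intro a _
    have := hfin a
    exact Integrable.of_finite

lemma substW_nonneg {p : ℝ} (hp0 : 0 ≤ p) (hp1 : p ≤ 1) (a b : Fin 4) : 0 ≤ substW p a b := by
  unfold substW; split <;> linarith

lemma substW_sum {p : ℝ} (a : Fin 4) : ∑ b, substW p a b = 1 := by
  fin_cases a <;> simp [substW, Fin.sum_univ_four] <;> ring

lemma wrap_inj {G : ℕ} (hG : 0 < G) {k : ℕ} (hkG : k ≤ G) (i : Fin G) :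
    Function.Injective (fun t : Fin k => wrap G hG ((i : ℕ) + (t : ℕ))) := by
  intro t s h
  have h1 : ((i : ℕ) + (t : ℕ)) % G = ((i : ℕ) + (s : ℕ)) % G := congrArg Fin.val h
  have h2 : (t : ℕ) % G = (s : ℕ) % G := Nat.ModEq.add_left_cancel' (i : ℕ) h1
  rw [Nat.mod_eq_of_lt (lt_of_lt_of_le t.isLt hkG),
      Nat.mod_eq_of_lt (lt_of_lt_of_le s.isLt hkG)] at h2
  exact Fin.ext h2

/-- For a `k`-mer `v`,
`E[f'_v] = Σ_{w ∈ K} f_w·(1−p)^{k−d_H(v,w)}·(p/3)^{d_H(v,w)}`, where `K` is the set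
of distinct `k`-mers occurring in `x`, `f_w` counts the circular positions whose
window of `x` equals `w`, and `f'_v` counts those whose window of `y` equals `v`. -/
theorem expected_kmer_count {G : ℕ} (hG : 0 < G) (x : Fin G → Fin 4) (p : ℝ)
    (hp0 : 0 ≤ p) (hp1 : p ≤ 1) (k : ℕ) (hk : 1 ≤ k) (hkG : k ≤ G) (v : Fin k → Fin 4) :
    ∫ y, ((Finset.univ.filter fun i : Fin G => window hG y k i = v).card : ℝ)
        ∂(mutate p x)
      = ∑ w ∈ Finset.univ.image (fun i : Fin G => window hG x k i),
          ((Finset.univ.filter fun i : Fin G => window hG x k i = w).card : ℝ)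
            * (1 - p) ^ (k - hammingDist v w) * (p / 3) ^ hammingDist v w := by
  have hwpos : ∀ y, 0 ≤ mutateW p x y := fun y =>
    Finset.prod_nonneg fun j _ => substW_nonneg hp0 hp1 _ _
  rw [mutate, integral_discMeasure _ hwpos]
  -- rewrite count as sum of indicators
  have hcount : ∀ y : Fin G → Fin 4,
      ((Finset.univ.filter fun i : Fin G => window hG y k i = v).card : ℝ)
        = ∑ i : Fin G, (if window hG y k i = v then (1:ℝ) else 0) := by
    intro y
    rw [Finset.card_filter]
    push_cast
    rfl
  simp_rw [hcount, Finset.mul_sum]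
  rw [Finset.sum_comm]
  -- per-position marginal
  have hmarg : ∀ i : Fin G,
      (∑ y : Fin G → Fin 4, mutateW p x y * (if window hG y k i = v then (1:ℝ) else 0))
        = (1 - p) ^ (k - hammingDist v (window hG x k i))
            * (p / 3) ^ hammingDist v (window hG x k i) := by
    intro i
    set pos : Fin k → Fin G := fun t => wrap G hG ((i : ℕ) + (t : ℕ)) with hposdef
    have hinj : Function.Injective pos := wrap_inj hG hkG i
    set h : Fin G → Fin 4 → ℝ := fun j b =>
      substW p (x j) b * (if ∀ t, pos t = j → b = v t then 1 else 0) with hdef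
    have claim1 : ∀ y : Fin G → Fin 4,
        (∏ j, h j (y j)) = mutateW p x y * (if window hG y k i = v then (1:ℝ) else 0) := by
      intro y
      rw [hdef]
      simp only
      rw [Finset.prod_mul_distrib, Finset.prod_boole]
      unfold mutateW
      congr 1
      by_cases H : window hG y k i = v
      · rw [if_pos H, if_pos]
        intro j _ t ht
        rw [← ht]
        exact congrFun H t
      · rw [if_neg H, if_neg]
        intro Hc
        apply H
        funext t
        exact Hc (pos t) (Finset.mem_univ _) t rfl
    have claim2 : (∑ y : Fin G → Fin 4, ∏ j, h j (y j)) = ∏ j, ∑ b, h j b :=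
      (Fintype.prod_sum h).symm
    have hIn : ∀ t : Fin k, (∑ b, h (pos t) b) = substW p (x (pos t)) (v t) := by
      intro t
      have hiff : ∀ b : Fin 4, (∀ s, pos s = pos t → b = v s) ↔ b = v t := by
        intro b
        constructor
        · intro H; exact H t rfl
        · intro H s hs; rw [H, hinj hs]
      rw [hdef]
      simp only [hiff]
      simp [mul_ite]
    have hOut : ∀ j ∈ (Finset.univ : Finset (Fin G)),
        j ∉ Finset.univ.image pos → (∑ b, h j b) = 1 := by
      intro j _ hj
      have : ∀ t : Fin k, pos t ≠ j := by
        intro t ht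
        exact hj (ht ▸ Finset.mem_image_of_mem pos (Finset.mem_univ t))
      rw [hdef]
      simp only
      have : ∀ b : Fin 4, (if ∀ t, pos t = j → b = v t then (1:ℝ) else 0) = 1 := by
        intro b
        rw [if_pos]
        intro t ht
        exact absurd ht (this t)
      simp_rw [this, mul_one]
      exact substW_sum _
    have claim3 : (∏ j, ∑ b, h j b) = ∏ t, substW p (x (pos t)) (v t) := by
      rw [← Finset.prod_subset (Finset.subset_univ (Finset.univ.image pos)) hOut,
          Finset.prod_image (fun a _ b _ hab => hinj hab)]
      exact Finset.prod_congr rfl fun t _ => hIn t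
    have claim4 : (∏ t, substW p (x (pos t)) (v t))
        = (1 - p) ^ (k - hammingDist v (window hG x k i))
            * (p / 3) ^ hammingDist v (window hG x k i) := by
      have hsub : ∀ t : Fin k, substW p (x (pos t)) (v t)
          = if v t = window hG x k i t then 1 - p else p / 3 := fun t => rfl
      simp_rw [hsub]
      rw [Finset.prod_ite]
      rw [Finset.prod_const, Finset.prod_const]
      have hdist : hammingDist v (window hG x k i)
          = (Finset.univ.filter fun t => ¬ v t = window hG x k i t).card := rfl
      have hcompl : (Finset.univ.filter fun t => v t = window hG x k i t).card
          = k - hammingDist v (window hG x k i) := by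
        have := Finset.card_filter_add_card_filter_not
          (s := (Finset.univ : Finset (Fin k))) (p := fun t => v t = window hG x k i t)
        simp only [Finset.card_univ, Fintype.card_fin] at this
        omega
      rw [hcompl, ← hdist]
    calc ∑ y : Fin G → Fin 4, mutateW p x y * (if window hG y k i = v then (1:ℝ) else 0)
        = ∑ y : Fin G → Fin 4, ∏ j, h j (y j) := by
          exact (Finset.sum_congr rfl fun y _ => claim1 y).symm
      _ = ∏ j, ∑ b, h j b := claim2
      _ = ∏ t, substW p (x (pos t)) (v t) := claim3
      _ = _ := claim4
  simp_rw [hmarg]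
  rw [Finset.sum_comp (fun w => (1 - p) ^ (k - hammingDist v w) * (p / 3) ^ hammingDist v w)
    (fun i : Fin G => window hG x k i)]
  refine Finset.sum_congr rfl fun w _ => ?_
  rw [nsmul_eq_mul, mul_assoc]

end
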